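/- Let (b^{(i)})_{i≥1} be a sequence of reals with b^{(i)} ≥ ‖θ*‖ for all i, satisfying b^{(i+1)} ≤ ‖θ*‖ + (p/2^{(i−2)/2})·(b^{(i)}/√k₁) + (q i^{3/2}/2^{(i−2)/2})·√(d/k₁) for constants p, q, d, k₁ > 0. If k₁ ≥ 4p², then the sequence b^{(i)} converges to ‖θ*‖ as i → ∞. -/
import Mathlib


/-- Convergence of the norm estimates of ARL-LIN(norm): if `b^{(i)} ≥ ‖θ*‖` and
`b^{(i+1)} ≤ ‖θ*‖ + (p/2^{(i-2)/2}) b^{(i)}/√k₁ + (q i^{3/2}/2^{(i-2)/2}) √(d/k₁)`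
with `k₁ ≥ 4p²`, then `b^{(i)} → ‖θ*‖`. -/
theorem stmt12 (θn p q d k₁ : ℝ) (hθ : 0 ≤ θn) (hp : 0 < p) (hq : 0 < q)
    (hd : 0 < d) (hk : 0 < k₁) (hk₁ : 4 * p ^ 2 ≤ k₁) (b : ℕ → ℝ)
    (hlb : ∀ i, 1 ≤ i → θn ≤ b i)
    (hrec : ∀ i : ℕ, 1 ≤ i →
      b (i + 1) ≤ θn + (p / (2 : ℝ) ^ (((i : ℝ) - 2) / 2)) * (b i / Real.sqrt k₁)
        + (q * (i : ℝ) ^ ((3 : ℝ) / 2) / (2 : ℝ) ^ (((i : ℝ) - 2) / 2))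
            * Real.sqrt (d / k₁)) :
    Filter.Tendsto b Filter.atTop (nhds θn) := by
  have hsk : 0 < Real.sqrt k₁ := Real.sqrt_pos.mpr hk
  have hs2 : (1:ℝ) < Real.sqrt 2 := by
    nlinarith [Real.sq_sqrt (by norm_num : (0:ℝ) ≤ 2), Real.sqrt_nonneg 2]
  set s : ℝ := (Real.sqrt 2)⁻¹ with hs_def
  have hs0 : 0 ≤ s := by positivity
  have hs1 : s < 1 := by
    rw [hs_def, inv_lt_one_iff₀]; right; exact hs2
  -- rewrite the power of 2
  have key : ∀ i : ℕ, (2:ℝ) ^ (((i:ℝ) - 2) / 2) = Real.sqrt 2 ^ i / 2 := by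
    intro i
    rw [show ((i:ℝ) - 2) / 2 = (1/2) * (i:ℝ) - 1 by ring,
      Real.rpow_sub two_pos, Real.rpow_one,
      Real.rpow_mul (by norm_num : (0:ℝ) ≤ 2), ← Real.sqrt_eq_rpow,
      Real.rpow_natCast]
  have hcoef : ∀ (a : ℝ) (i : ℕ), a / (2:ℝ) ^ (((i:ℝ) - 2) / 2) = 2 * a * s ^ i := by
    intro a i
    rw [key i, div_div_eq_mul_div, div_eq_mul_inv, hs_def, ← inv_pow]
    ring
  -- half coefficient
  have hhalf : p / Real.sqrt k₁ ≤ 1 / 2 := by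
    have h2p : 2 * p ≤ Real.sqrt k₁ := by
      have := Real.sqrt_le_sqrt hk₁
      rwa [show 4 * p ^ 2 = (2*p)^2 by ring, Real.sqrt_sq (by positivity)] at this
    rw [div_le_div_iff₀ hsk (by norm_num)]
    linarith
  -- bound on the q-term
  set β : ℕ → ℝ := fun i => 2 * q * Real.sqrt (d / k₁) * ((i:ℝ) ^ 2 * s ^ i) with hβ_def
  have hβ0 : Filter.Tendsto β Filter.atTop (nhds 0) := by
    have := (tendsto_pow_const_mul_const_pow_of_lt_one 2 hs0 hs1).const_mul
      (2 * q * Real.sqrt (d / k₁))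
    simpa using this
  obtain ⟨B, hB⟩ := hβ0.bddAbove_range
  have hBub : ∀ i, β i ≤ B := fun i => hB (Set.mem_range_self i)
  have hβterm : ∀ i : ℕ, 1 ≤ i →
      (q * (i:ℝ) ^ ((3:ℝ)/2) / (2:ℝ) ^ (((i:ℝ) - 2) / 2)) * Real.sqrt (d / k₁) ≤ β i := by
    intro i hi
    have hi1 : (1:ℝ) ≤ (i:ℝ) := by exact_mod_cast hi
    have hpow : (i:ℝ) ^ ((3:ℝ)/2) ≤ (i:ℝ) ^ 2 := by
      have := Real.rpow_le_rpow_of_exponent_le hi1 (by norm_num : (3:ℝ)/2 ≤ 2)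
      rwa [show ((2:ℝ) : ℝ) = ((2:ℕ) : ℝ) by norm_num, Real.rpow_natCast] at this
    have h1 : q * (i:ℝ) ^ ((3:ℝ)/2) / (2:ℝ) ^ (((i:ℝ) - 2) / 2)
        = 2 * (q * (i:ℝ) ^ ((3:ℝ)/2)) * s ^ i := hcoef _ i
    rw [h1, hβ_def]
    have hsd : 0 ≤ Real.sqrt (d / k₁) := Real.sqrt_nonneg _
    have hsi : (0:ℝ) ≤ s ^ i := by positivity
    nlinarith [mul_le_mul_of_nonneg_left hpow (by positivity : (0:ℝ) ≤ 2 * q * s ^ i)]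
  -- boundedness
  set M : ℝ := max (b 2) (2 * (θn + max B 0)) with hM_def
  have hBM : θn + max B 0 ≤ M / 2 := by
    have : 2 * (θn + max B 0) ≤ M := le_max_right _ _
    linarith
  have hMb : ∀ i : ℕ, 2 ≤ i → b i ≤ M := by
    intro i hi
    induction i, hi using Nat.le_induction with
    | base => exact le_max_left _ _
    | succ i hi ih =>
      have hi1 : 1 ≤ i := by omega
      have hbnn : 0 ≤ b i := le_trans hθ (hlb i hi1)
      have hexp : (0:ℝ) ≤ ((i:ℝ) - 2) / 2 := by
        have : (2:ℝ) ≤ (i:ℝ) := by exact_mod_cast hi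
        linarith
      have hpow1 : (1:ℝ) ≤ (2:ℝ) ^ (((i:ℝ) - 2) / 2) := by
        rw [show (1:ℝ) = (2:ℝ) ^ (0:ℝ) from (Real.rpow_zero 2).symm]
        exact Real.rpow_le_rpow_of_exponent_le (by norm_num) hexp
      have hpowpos : (0:ℝ) < (2:ℝ) ^ (((i:ℝ) - 2) / 2) := by positivity
      have hterm1 : (p / (2:ℝ) ^ (((i:ℝ) - 2) / 2)) * (b i / Real.sqrt k₁)
          ≤ (1/2) * b i := by
        have h1 : p / (2:ℝ) ^ (((i:ℝ) - 2) / 2) ≤ p := by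
          rw [div_le_iff₀ hpowpos]; nlinarith
        calc (p / (2:ℝ) ^ (((i:ℝ) - 2) / 2)) * (b i / Real.sqrt k₁)
            ≤ p * (b i / Real.sqrt k₁) := by
              apply mul_le_mul_of_nonneg_right h1 (by positivity)
          _ = (p / Real.sqrt k₁) * b i := by ring
          _ ≤ (1/2) * b i := mul_le_mul_of_nonneg_right hhalf hbnn
      have := hrec i hi1
      have hb2 : β i ≤ max B 0 := le_trans (hBub i) (le_max_left _ _)
      have := this.trans (by linarith [hβterm i hi1] :
        θn + (p / (2:ℝ) ^ (((i:ℝ) - 2) / 2)) * (b i / Real.sqrt k₁)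
          + (q * (i:ℝ) ^ ((3:ℝ)/2) / (2:ℝ) ^ (((i:ℝ) - 2) / 2)) * Real.sqrt (d / k₁)
        ≤ θn + (1/2) * b i + max B 0)
      linarith
  have hM0 : 0 ≤ M := le_trans (le_trans hθ (hlb 2 (by norm_num))) (le_max_left _ _)
  -- squeeze
  set u : ℕ → ℝ := fun i => θn + (2 * p * M / Real.sqrt k₁) * s ^ i + β i with hu_def
  have hu : Filter.Tendsto u Filter.atTop (nhds θn) := by
    have h1 : Filter.Tendsto (fun i : ℕ => (2 * p * M / Real.sqrt k₁) * s ^ i)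
        Filter.atTop (nhds 0) := by
      simpa using (tendsto_pow_atTop_nhds_zero_of_lt_one hs0 hs1).const_mul
        (2 * p * M / Real.sqrt k₁)
    have := (tendsto_const_nhds (x := θn) (f := Filter.atTop (α := ℕ))).add h1 |>.add hβ0
    simpa using this
  have hub : ∀ᶠ i in Filter.atTop, b (i + 1) ≤ u i := by
    filter_upwards [Filter.eventually_ge_atTop 2] with i hi
    have hi1 : 1 ≤ i := by omega
    have hterm1 : (p / (2:ℝ) ^ (((i:ℝ) - 2) / 2)) * (b i / Real.sqrt k₁)
        ≤ (2 * p * M / Real.sqrt k₁) * s ^ i := by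
      have h1 : p / (2:ℝ) ^ (((i:ℝ) - 2) / 2) = 2 * p * s ^ i := hcoef p i
      rw [h1]
      have hbM : b i ≤ M := hMb i hi
      have h2 : b i / Real.sqrt k₁ ≤ M / Real.sqrt k₁ := by gcongr
      calc 2 * p * s ^ i * (b i / Real.sqrt k₁)
          ≤ 2 * p * s ^ i * (M / Real.sqrt k₁) := by
            apply mul_le_mul_of_nonneg_left h2 (by positivity)
        _ = (2 * p * M / Real.sqrt k₁) * s ^ i := by ring
    have hterm2 := hβterm i hi1
    have := hrec i hi1
    rw [hu_def]
    dsimp only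
    linarith
  have hlb' : ∀ᶠ i in Filter.atTop, θn ≤ b (i + 1) := by
    filter_upwards [Filter.eventually_ge_atTop 1] with i hi
    exact hlb (i + 1) (by omega)
  have hshift : Filter.Tendsto (fun i => b (i + 1)) Filter.atTop (nhds θn) :=
    tendsto_of_tendsto_of_tendsto_of_le_of_le' tendsto_const_nhds hu hlb' hub
  exact (Filter.tendsto_add_atTop_iff_nat 1).mp hshift
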